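/- Let d ≥ 1 be an integer and σ > d/2, and let Φ : ℝ^d → ℝ be a continuous integrable function whose Fourier transform satisfies c₁(1+‖ω‖₂²)^{-σ} ≤ Φ̂(ω) ≤ c₂(1+‖ω‖₂²)^{-σ} for all ω ∈ ℝ^d, for constants 0 < c₁ ≤ c₂. Then for every δ ∈ (0,1] and every integrable and square-integrable g : ℝ^d → ℂ, the transition inequality ‖g‖²_{Φ_δ} ≤ (2^σ/c₁)·(‖g‖²_{L²(ℝ^d)} + δ^{2σ} ‖g‖²_{W^{σ,2}(ℝ^d)}) holds (as an inequality of possibly infinite quantities). -/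

import Mathlib

/-!
Since `Φ̂(δω) ≥ c₁ (1 + δ²‖ω‖²)^{-σ}` and `1 + δ²‖ω‖² ≤ 1 + δ²(1 + ‖ω‖²)`, the elementary bound
`(a + b)^σ ≤ 2^σ (a^σ + b^σ)` gives `1 / Φ̂(δω) ≤ (2^σ / c₁) (1 + δ^{2σ} (1 + ‖ω‖²)^σ)` pointwise;
integrating against `|ĝ|²`, the first term is `‖g‖²_{L²}` by Plancherel.

Plancherel for `g ∈ L¹ ∩ L²` comes from Mathlib's `L²` Fourier transform: tested against smooth
compactly supported functions (via tempered distributions), the `L²` transform of `g` agrees a.e.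
with its Fourier integral `𝓕 g`. Mathlib's `𝓕` uses the kernel `e^{-2πi⟨x, ξ⟩}` without
normalisation, so `ĝ(ω) = (2π)^{-d/2} 𝓕 g (ω / 2π)` and the two constants cancel in `‖ĝ‖²_{L²}`.
-/

open MeasureTheory ENNReal
open scoped RealInnerProductSpace

/-- The Fourier transform `û(ω) = (2π)^{-d/2} ∫ u(x) e^{-i x·ω} dx`. -/
noncomputable def ftrans {d : ℕ} (f : EuclideanSpace ℝ (Fin d) → ℂ)
    (ω : EuclideanSpace ℝ (Fin d)) : ℂ :=
  (((2 * Real.pi) ^ (-(d : ℝ) / 2) : ℝ) : ℂ) *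
    ∫ x, Complex.exp (-(Complex.I * ((inner ℝ x ω : ℝ) : ℂ))) * f x

open FourierTransform
open scoped SchwartzMap

theorem MeasureTheory.eLpNorm_two_sq {α E : Type*} [MeasurableSpace α] [NormedAddCommGroup E]
    (f : α → E) (μ : Measure α) :
    eLpNorm f 2 μ ^ 2 = ∫⁻ x, (‖f x‖₊ : ℝ≥0∞) ^ 2 ∂μ := by
  simpa [enorm_eq_nnnorm] using
    eLpNorm_nnreal_pow_eq_lintegral (f := f) (μ := μ) (p := 2) two_ne_zero

theorem MeasureTheory.Measure.lintegral_comp_smul {E : Type*} [NormedAddCommGroup E]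
    [NormedSpace ℝ E] [MeasurableSpace E] [BorelSpace E] [FiniteDimensional ℝ E]
    (μ : Measure E) [μ.IsAddHaarMeasure] (f : E → ℝ≥0∞) {r : ℝ} (hr : r ≠ 0) :
    ∫⁻ x, f (r • x) ∂μ = ENNReal.ofReal |(r ^ Module.finrank ℝ E)⁻¹| * ∫⁻ x, f x ∂μ := by
  rw [← smul_eq_mul, ← lintegral_smul_measure, ← Measure.map_addHaar_smul μ hr]
  exact (lintegral_map_equiv f (MeasurableEquiv.smul₀ r hr)).symm

theorem Real.add_rpow_le_two_rpow_mul_rpow_add_rpow {a b p : ℝ} (ha : 0 ≤ a) (hb : 0 ≤ b)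
    (hp : 0 ≤ p) : (a + b) ^ p ≤ 2 ^ p * (a ^ p + b ^ p) := calc
  (a + b) ^ p ≤ (2 * max a b) ^ p := by
    gcongr
    rw [two_mul]
    exact add_le_add (le_max_left a b) (le_max_right a b)
  _ = 2 ^ p * max a b ^ p := Real.mul_rpow zero_le_two (ha.trans (le_max_left a b))
  _ ≤ 2 ^ p * (a ^ p + b ^ p) := by
    gcongr
    rcases le_total a b with h | h
    · rw [max_eq_right h]; linarith [Real.rpow_nonneg ha p]
    · rw [max_eq_left h]; linarith [Real.rpow_nonneg hb p]

section Fourier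

variable {V F : Type*} [NormedAddCommGroup V] [InnerProductSpace ℝ V] [FiniteDimensional ℝ V]
  [MeasurableSpace V] [BorelSpace V]
  [NormedAddCommGroup F] [InnerProductSpace ℂ F]

theorem MeasureTheory.Integrable.continuous_fourier {g : V → F} (hg : Integrable g) :
    Continuous (𝓕 g) :=
  VectorFourier.fourierIntegral_continuous Real.continuous_fourierChar continuous_inner hg

variable [CompleteSpace F]

theorem Real.integral_fourier_smul_eq {φ : V → ℂ} {g : V → F}
    (hφ : Integrable φ) (hg : Integrable g) :
    ∫ x, 𝓕 φ x • g x = ∫ ξ, φ ξ • 𝓕 g ξ := by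
  simpa using! VectorFourier.integral_fourierIntegral_smul_eq_flip (L := innerₗ V)
    Real.continuous_fourierChar continuous_inner hφ hg

theorem MeasureTheory.MemLp.fourier_toLp_ae_eq {g : V → F} (hg : Integrable g)
    (hg2 : MemLp g 2) :
    ((𝓕 hg2.toLp : Lp F 2 (volume : Measure V)) : V → F) =ᵐ[volume] 𝓕 g := by
  refine ae_eq_of_integral_contDiff_smul_eq ((Lp.memLp _).locallyIntegrable one_le_two)
    hg.continuous_fourier.locallyIntegrable fun φ hφ hφc => ?_
  set ψ : 𝓢(V, ℂ) := (hφc.comp_left rfl : HasCompactSupport (Complex.ofRealCLM ∘ φ)).toSchwartzMap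
    (by fun_prop)
  have hψ : ∀ x, ψ x = φ x := fun x => rfl
  calc _ = ∫ x, ψ x • ((𝓕 hg2.toLp : Lp F 2 (volume : Measure V)) : V → F) x := by
        simp only [hψ, Complex.coe_smul]
    _ = 𝓕 (hg2.toLp : 𝓢'(V, F)) ψ := by
        rw [Lp.fourier_toTemperedDistribution_eq, Lp.toTemperedDistribution_apply]
    _ = ∫ x, 𝓕 ψ x • g x := by
        rw [TemperedDistribution.fourier_apply, Lp.toTemperedDistribution_apply]
        exact integral_congr_ae (hg2.coeFn_toLp.mono fun x hx => congrArg _ hx)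
    _ = ∫ x, φ x • 𝓕 g x := by
        rw [SchwartzMap.fourier_coe, Real.integral_fourier_smul_eq ψ.integrable hg]
        simp only [hψ, Complex.coe_smul]

theorem MeasureTheory.MemLp.eLpNorm_fourier_eq {g : V → F} (hg : Integrable g)
    (hg2 : MemLp g 2) :
    eLpNorm (𝓕 g) 2 volume = eLpNorm g 2 volume := by
  rw [← eLpNorm_congr_ae (hg2.fourier_toLp_ae_eq hg), ← eLpNorm_congr_ae hg2.coeFn_toLp,
    ← Lp.enorm_def, ← Lp.enorm_def]
  exact (Lp.fourierTransformₗᵢ V F).enorm_map _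

end Fourier

section ScaledKernel

variable {V : Type*} [SeminormedAddCommGroup V] [NormedSpace ℝ V] {ψ : V → ℝ} {σ c₁ δ : ℝ}

theorem inv_apply_smul_le (hσ : 0 ≤ σ) (hc₁ : 0 < c₁) (hδ : 0 ≤ δ)
    (hlow : ∀ ω, c₁ * (1 + ‖ω‖ ^ 2) ^ (-σ) ≤ ψ ω) (ω : V) :
    (ψ (δ • ω))⁻¹ ≤ 2 ^ σ / c₁ * (1 + δ ^ (2 * σ) * (1 + ‖ω‖ ^ 2) ^ σ) := calc
  (ψ (δ • ω))⁻¹ ≤ (c₁ * (1 + ‖δ • ω‖ ^ 2) ^ (-σ))⁻¹ := inv_anti₀ (by positivity) (hlow _)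
  _ = c₁⁻¹ * (1 + δ ^ 2 * ‖ω‖ ^ 2) ^ σ := by
    rw [mul_inv, ← Real.rpow_neg (by positivity), neg_neg, norm_smul, mul_pow, Real.norm_eq_abs,
      sq_abs]
  _ ≤ c₁⁻¹ * (2 ^ σ * (1 ^ σ + (δ ^ 2 * (1 + ‖ω‖ ^ 2)) ^ σ)) := by
    gcongr
    refine (Real.rpow_le_rpow (by positivity) ?_ hσ).trans
      (Real.add_rpow_le_two_rpow_mul_rpow_add_rpow zero_le_one (by positivity) hσ)
    gcongr
    linarith
  _ = 2 ^ σ / c₁ * (1 + δ ^ (2 * σ) * (1 + ‖ω‖ ^ 2) ^ σ) := by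
    rw [Real.one_rpow, Real.mul_rpow (by positivity) (by positivity), Real.rpow_mul hδ,
      Real.rpow_two]
    ring

theorem div_ofReal_apply_smul_le (hσ : 0 ≤ σ) (hc₁ : 0 < c₁) (hδ : 0 ≤ δ)
    (hlow : ∀ ω, c₁ * (1 + ‖ω‖ ^ 2) ^ (-σ) ≤ ψ ω) (a : ℝ≥0∞) (ω : V) :
    a / ENNReal.ofReal (ψ (δ • ω)) ≤ ENNReal.ofReal (2 ^ σ / c₁) *
      (a + ENNReal.ofReal (δ ^ (2 * σ)) * (a * ENNReal.ofReal ((1 + ‖ω‖ ^ 2) ^ σ))) := by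
  have hψ : 0 < ψ (δ • ω) := (by positivity : 0 < c₁ * _).trans_le (hlow _)
  calc a / ENNReal.ofReal (ψ (δ • ω)) = a * ENNReal.ofReal (ψ (δ • ω))⁻¹ := by
        rw [div_eq_mul_inv, ofReal_inv_of_pos hψ]
    _ ≤ a * ENNReal.ofReal (2 ^ σ / c₁ * (1 + δ ^ (2 * σ) * (1 + ‖ω‖ ^ 2) ^ σ)) := by
        gcongr
        exact inv_apply_smul_le hσ hc₁ hδ hlow ω
    _ = _ := by
        rw [ofReal_mul (by positivity), ofReal_add zero_le_one (by positivity), ofReal_one,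
          ofReal_mul (by positivity)]
        ring

end ScaledKernel

theorem ftrans_eq_fourier {d : ℕ} (g : EuclideanSpace ℝ (Fin d) → ℂ)
    (ω : EuclideanSpace ℝ (Fin d)) :
    ftrans g ω = (((2 * Real.pi) ^ (-(d : ℝ) / 2) : ℝ) : ℂ) * 𝓕 g ((2 * Real.pi)⁻¹ • ω) := by
  rw [ftrans, Real.fourier_eq']
  congr 1
  refine integral_congr_ae (Filter.Eventually.of_forall fun x => ?_)
  have hπ : 2 * Real.pi ≠ 0 := by positivity
  dsimp only
  rw [real_inner_smul_right, smul_eq_mul]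
  congr 2
  push_cast
  field_simp

theorem continuous_ftrans {d : ℕ} {g : EuclideanSpace ℝ (Fin d) → ℂ} (hg : Integrable g) :
    Continuous (ftrans g) := by
  simp_rw [funext (ftrans_eq_fourier g)]
  exact continuous_const.mul (hg.continuous_fourier.comp (continuous_const_smul _))

theorem lintegral_nnnorm_ftrans_sq {d : ℕ} {g : EuclideanSpace ℝ (Fin d) → ℂ} (hg : Integrable g)
    (hg2 : MemLp g 2) :
    ∫⁻ ω, (‖ftrans g ω‖₊ : ℝ≥0∞) ^ 2 = eLpNorm g 2 volume ^ 2 := by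
  let c : ℝ := (2 * Real.pi) ^ (-(d : ℝ) / 2)
  have hc : c ^ 2 * |(((2 * Real.pi)⁻¹) ^ d)⁻¹| = 1 := by
    rw [inv_pow, inv_inv, abs_of_pos (by positivity), ← Real.rpow_natCast, ← Real.rpow_natCast,
      ← Real.rpow_mul (by positivity), ← Real.rpow_add (by positivity)]
    norm_num
  have hpt : ∀ ω, (‖ftrans g ω‖₊ : ℝ≥0∞) ^ 2 =
      ENNReal.ofReal (c ^ 2) * (‖𝓕 g ((2 * Real.pi)⁻¹ • ω)‖₊ : ℝ≥0∞) ^ 2 := by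
    intro ω
    rw [ftrans_eq_fourier, nnnorm_mul, ENNReal.coe_mul, mul_pow, Complex.nnnorm_real,
      ← enorm_eq_nnnorm, Real.enorm_eq_ofReal (by positivity), ← ofReal_pow (by positivity)]
  rw [lintegral_congr hpt, lintegral_const_mul' _ _ ofReal_ne_top,
    Measure.lintegral_comp_smul volume (fun ω => (‖𝓕 g ω‖₊ : ℝ≥0∞) ^ 2) (by positivity),
    finrank_euclideanSpace_fin, ← eLpNorm_two_sq, hg2.eLpNorm_fourier_eq hg, ← mul_assoc,
    ← ofReal_mul (by positivity), hc, ofReal_one, one_mul]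

theorem stmt10_general (d : ℕ) (σ : ℝ) (hσ : (d : ℝ) / 2 < σ)
    (c₁ : ℝ) (hc₁ : 0 < c₁)
    (Φhat : EuclideanSpace ℝ (Fin d) → ℝ)
    (hlow : ∀ ω, c₁ * (1 + ‖ω‖ ^ 2) ^ (-σ) ≤ Φhat ω) :
    ∀ δ : ℝ, 0 < δ → δ ≤ 1 →
      ∀ g : EuclideanSpace ℝ (Fin d) → ℂ, Integrable g → MemLp g 2 →
        (∫⁻ ω, (‖ftrans g ω‖₊ : ℝ≥0∞) ^ 2 / ENNReal.ofReal (Φhat (δ • ω)))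
          ≤ ENNReal.ofReal ((2 : ℝ) ^ σ / c₁) *
            ((eLpNorm g 2 volume) ^ 2 +
              ENNReal.ofReal (δ ^ (2 * σ)) *
                ∫⁻ ω, (‖ftrans g ω‖₊ : ℝ≥0∞) ^ 2
                  * ENNReal.ofReal ((1 + ‖ω‖ ^ 2) ^ σ)) := by
  intro δ hδ _ g hg hg2
  have hσ0 : 0 ≤ σ := by linarith [(by positivity : (0 : ℝ) ≤ d / 2)]
  have hF : Measurable fun ω => (‖ftrans g ω‖₊ : ℝ≥0∞) ^ 2 :=
    (continuous_ftrans hg).measurable.nnnorm.coe_nnreal_ennreal.pow_const 2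
  calc _ ≤ ∫⁻ ω, ENNReal.ofReal (2 ^ σ / c₁) * ((‖ftrans g ω‖₊ : ℝ≥0∞) ^ 2 +
          ENNReal.ofReal (δ ^ (2 * σ)) *
            ((‖ftrans g ω‖₊ : ℝ≥0∞) ^ 2 * ENNReal.ofReal ((1 + ‖ω‖ ^ 2) ^ σ))) :=
        lintegral_mono fun ω => div_ofReal_apply_smul_le hσ0 hc₁ hδ.le hlow _ ω
    _ = _ := by
        rw [lintegral_const_mul' _ _ ofReal_ne_top, lintegral_add_left hF,
          lintegral_const_mul' _ _ ofReal_ne_top, lintegral_nnnorm_ftrans_sq hg hg2]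

theorem stmt10 (d : ℕ) (hd : 1 ≤ d) (σ : ℝ) (hσ : (d : ℝ) / 2 < σ)
    (c₁ c₂ : ℝ) (hc₁ : 0 < c₁) (hc₁₂ : c₁ ≤ c₂)
    (Φ : EuclideanSpace ℝ (Fin d) → ℝ) (hΦc : Continuous Φ)
    (hΦi : Integrable (fun x => (Φ x : ℂ)))
    (Φhat : EuclideanSpace ℝ (Fin d) → ℝ)
    (hΦhat : ∀ ω, ftrans (fun x => (Φ x : ℂ)) ω = ((Φhat ω : ℝ) : ℂ))
    (hlow : ∀ ω, c₁ * (1 + ‖ω‖ ^ 2) ^ (-σ) ≤ Φhat ω)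
    (hup : ∀ ω, Φhat ω ≤ c₂ * (1 + ‖ω‖ ^ 2) ^ (-σ)) :
    ∀ δ : ℝ, 0 < δ → δ ≤ 1 →
      ∀ g : EuclideanSpace ℝ (Fin d) → ℂ, Integrable g → MemLp g 2 →
        (∫⁻ ω, (‖ftrans g ω‖₊ : ℝ≥0∞) ^ 2 / ENNReal.ofReal (Φhat (δ • ω)))
          ≤ ENNReal.ofReal ((2 : ℝ) ^ σ / c₁) *
            ((eLpNorm g 2 volume) ^ 2 +
              ENNReal.ofReal (δ ^ (2 * σ)) *
                ∫⁻ ω, (‖ftrans g ω‖₊ : ℝ≥0∞) ^ 2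
                  * ENNReal.ofReal ((1 + ‖ω‖ ^ 2) ^ σ)) :=
  stmt10_general d σ hσ c₁ hc₁ Φhat hlow
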